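/- Let L_W be differentiable with M-Lipschitz gradient, and suppose θ_{t+1} = θ_t (a stalled DSGD step with G_W + γ_t G_C = 0 at θ_t). If γ_{t+1} ≠ γ_t, ‖G_W‖² ≥ γ_{t+1}²‖G_C‖², and 0 < η < m/M, then the next step θ_{t+2} = θ_{t+1} − (η/m)(G_W + γ_{t+1}G_C) satisfies L_W(θ_{t+2}) ≤ L_W(θ_t) − (1/m)(η/2 − Mη²/(2m))‖G_W + γ_{t+1}G_C‖², and this quantity is strictly negative unless G_W = G_C = 0. -/

import Mathlib

/-!
When the step stalls, `G_W + γ_t G_C = 0`; if also `G_W + γ_{t+1} G_C = 0` with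
`γ_{t+1} ≠ γ_t`, subtracting gives `G_C = 0` and then `G_W = 0`. So away from a true
stationary point the direction `G = G_W + γ_{t+1} G_C` is nonzero. The condition
`‖G_W‖ ≥ γ_{t+1}‖G_C‖` makes `G` a descent direction of quality `⟪G_W, G⟫ ≥ ½‖G‖²`, and
the descent lemma for an `M`-smooth function turns a step of length `η/m` along `-G` into
a decrease of at least `(1/m)(η/2 - Mη²/(2m))‖G‖²`, positive because `Mη < m`.
-/

open InnerProductSpace

section Descent

variable {F : Type*} [NormedAddCommGroup F] [InnerProductSpace ℝ F] [CompleteSpace F]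

theorem HasGradientAt.hasDerivAt_comp_add_smul {f : F → ℝ} {f' x v : F} {t : ℝ}
    (hf : HasGradientAt f f' (x + t • v)) :
    HasDerivAt (fun s : ℝ => f (x + s • v)) ⟪f', v⟫_ℝ t := by
  have hline : HasDerivAt (fun s : ℝ => x + s • v) v t := by
    simpa using ((hasDerivAt_id t).smul_const v).const_add x
  have hcomp := hf.hasFDerivAt.comp_hasDerivAt t hline
  rw [toDual_apply_apply] at hcomp
  exact hcomp

theorem le_add_inner_gradient_add_of_lipschitz_gradient {f : F → ℝ} {M : ℝ}
    (hf : Differentiable ℝ f)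
    (hlip : ∀ x y, ‖gradient f x - gradient f y‖ ≤ M * ‖x - y‖) (x v : F) :
    f (x + v) ≤ f x + ⟪gradient f x, v⟫_ℝ + M / 2 * ‖v‖ ^ 2 := by
  set ψ : ℝ → ℝ := fun t => f (x + t • v) - t * ⟪gradient f x, v⟫_ℝ - M / 2 * t ^ 2 * ‖v‖ ^ 2
  set ψ' : ℝ → ℝ := fun t =>
    ⟪gradient f (x + t • v) - gradient f x, v⟫_ℝ - M * t * ‖v‖ ^ 2
  have hψ : ∀ t, HasDerivAt ψ (ψ' t) t := fun t => by
    have hfline : HasDerivAt (fun s : ℝ => f (x + s • v)) ⟪gradient f (x + t • v), v⟫_ℝ t :=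
      (hf _).hasGradientAt.hasDerivAt_comp_add_smul
    have hsq := ((hasDerivAt_pow 2 t).const_mul (M / 2)).mul_const (‖v‖ ^ 2)
    refine ((hfline.sub ((hasDerivAt_id t).mul_const ⟪gradient f x, v⟫_ℝ)).sub hsq).congr_deriv ?_
    simp only [ψ', inner_sub_left]
    ring
  have hψ'_nonpos : ∀ t ∈ interior (Set.Icc (0 : ℝ) 1), ψ' t ≤ 0 := fun t ht => by
    rw [interior_Icc] at ht
    have hstep : ‖gradient f (x + t • v) - gradient f x‖ ≤ M * (t * ‖v‖) := by
      simpa [norm_smul, abs_of_pos ht.1] using hlip (x + t • v) x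
    have := real_inner_le_norm (gradient f (x + t • v) - gradient f x) v
    nlinarith [mul_le_mul_of_nonneg_right hstep (norm_nonneg v)]
  have hanti : AntitoneOn ψ (Set.Icc 0 1) :=
    antitoneOn_of_hasDerivWithinAt_nonpos (convex_Icc 0 1)
      (fun t _ => (hψ t).continuousAt.continuousWithinAt)
      (fun t _ => (hψ t).hasDerivWithinAt) hψ'_nonpos
  have h01 := hanti (Set.left_mem_Icc.2 zero_le_one) (Set.right_mem_Icc.2 zero_le_one) zero_le_one
  simp only [ψ, zero_smul, add_zero, one_smul, zero_mul, sub_zero, one_pow, mul_one,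
    zero_pow two_ne_zero, mul_zero] at h01
  linarith

theorem le_sub_mul_norm_sq_of_half_norm_sq_le_inner {f : F → ℝ} {M : ℝ}
    (hf : Differentiable ℝ f)
    (hlip : ∀ x y, ‖gradient f x - gradient f y‖ ≤ M * ‖x - y‖) (x G : F) {s : ℝ} (hs : 0 ≤ s)
    (hG : ‖G‖ ^ 2 / 2 ≤ ⟪gradient f x, G⟫_ℝ) :
    f (x - s • G) ≤ f x - (s / 2 - M * s ^ 2 / 2) * ‖G‖ ^ 2 := by
  have hdesc := le_add_inner_gradient_add_of_lipschitz_gradient hf hlip x (-(s • G))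
  rw [← sub_eq_add_neg, inner_neg_right, real_inner_smul_right, norm_neg, norm_smul,
    Real.norm_eq_abs, mul_pow, sq_abs] at hdesc
  nlinarith [mul_nonneg hs (sub_nonneg.2 hG)]

end Descent

theorem half_norm_add_sq_le_inner_add_right {E : Type*} [SeminormedAddCommGroup E]
    [InnerProductSpace ℝ E] {u w : E} (h : ‖w‖ ^ 2 ≤ ‖u‖ ^ 2) :
    ‖u + w‖ ^ 2 / 2 ≤ ⟪u, u + w⟫_ℝ := by
  rw [norm_add_sq_real, inner_add_right, real_inner_self_eq_norm_sq]
  linarith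

theorem eq_zero_of_add_smul_eq_zero_of_ne {R E : Type*} [Ring R] [IsDomain R] [AddCommGroup E]
    [Module R E] [Module.IsTorsionFree R E] {a b : R} {u w : E} (hab : a ≠ b)
    (ha : u + a • w = 0) (hb : u + b • w = 0) : u = 0 ∧ w = 0 := by
  have hw : w = 0 := by
    have hsub : (a - b) • w = 0 := by
      rw [sub_smul, ← add_sub_add_left_eq_sub (a • w) (b • w) u, ha, hb, sub_zero]
    exact (smul_eq_zero.1 hsub).resolve_left (sub_ne_zero.2 hab)
  subst hw
  simpa using ha

theorem mul_lt_of_lt_div_of_pos {M η m : ℝ} (hm : 0 < m) (hη : 0 < η) (h : η < m / M) :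
    M * η < m := by
  rcases le_or_gt M 0 with hM | hM
  · nlinarith
  · rwa [lt_div_iff₀ hM, mul_comm] at h

theorem stmt16_general {n : ℕ} (LW : EuclideanSpace ℝ (Fin n) → ℝ) (M η m γt γt1 : ℝ)
    (hLW : Differentiable ℝ LW)
    (hlip : ∀ x y, ‖gradient LW x - gradient LW y‖ ≤ M * ‖x - y‖)
    (θt : EuclideanSpace ℝ (Fin n)) (GC : EuclideanSpace ℝ (Fin n))
    (hne : γt1 ≠ γt)
    (hstall : gradient LW θt + γt • GC = 0)
    (hG : ‖gradient LW θt‖ ^ 2 ≥ γt1 ^ 2 * ‖GC‖ ^ 2)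
    (hm : 0 < m) (hη : 0 < η) (hηM : η < m / M)
    (θt2 : EuclideanSpace ℝ (Fin n))
    (hθ : θt2 = θt - (η / m) • (gradient LW θt + γt1 • GC)) :
    LW θt2 ≤ LW θt - (1 / m) * (η / 2 - M * η ^ 2 / (2 * m)) * ‖gradient LW θt + γt1 • GC‖ ^ 2
    ∧ (¬(gradient LW θt = 0 ∧ GC = 0) →
        LW θt - (1 / m) * (η / 2 - M * η ^ 2 / (2 * m)) * ‖gradient LW θt + γt1 • GC‖ ^ 2
          < LW θt) := by
  have hcoef : 1 / m * (η / 2 - M * η ^ 2 / (2 * m)) = η / m / 2 - M * (η / m) ^ 2 / 2 := by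
    field_simp
  have hdir : ‖gradient LW θt + γt1 • GC‖ ^ 2 / 2 ≤ ⟪gradient LW θt, gradient LW θt + γt1 • GC⟫_ℝ :=
    half_norm_add_sq_le_inner_add_right <| by
      rwa [norm_smul, Real.norm_eq_abs, mul_pow, sq_abs]
  refine ⟨?_, fun hnontriv => ?_⟩
  · rw [hθ, hcoef]
    exact le_sub_mul_norm_sq_of_half_norm_sq_le_inner hLW hlip θt _ (by positivity) hdir
  · have hdir_ne : gradient LW θt + γt1 • GC ≠ 0 := fun h =>
      hnontriv (eq_zero_of_add_smul_eq_zero_of_ne hne.symm hstall h)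
    have hMη := mul_lt_of_lt_div_of_pos hm hη hηM
    have hcoef_pos : 0 < 1 / m * (η / 2 - M * η ^ 2 / (2 * m)) := by
      rw [show η / 2 - M * η ^ 2 / (2 * m) = η * (m - M * η) / (2 * m) by field_simp]
      have := sub_pos.2 hMη
      positivity
    have := norm_pos_iff.2 hdir_ne
    exact sub_lt_self _ (mul_pos hcoef_pos (by positivity))

/-- Escape mechanism of DSGD from a stalled step: if `G_W + γ_t G_C = 0` at `θ_t`
(so `θ_{t+1} = θ_t`), `γ_{t+1} ≠ γ_t` are positive, `‖G_W‖² ≥ γ_{t+1}²‖G_C‖²` and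
`0 < η < m/M`, then the next step satisfies the descent inequality, whose decrement is
strictly positive unless `G_W = G_C = 0`. -/
theorem stmt16 {n : ℕ} (LW : EuclideanSpace ℝ (Fin n) → ℝ) (M η m γt γt1 : ℝ)
    (hLW : Differentiable ℝ LW)
    (hlip : ∀ x y, ‖gradient LW x - gradient LW y‖ ≤ M * ‖x - y‖)
    (θt : EuclideanSpace ℝ (Fin n)) (GC : EuclideanSpace ℝ (Fin n))
    (hγt : 0 < γt) (hγt1 : 0 < γt1) (hne : γt1 ≠ γt)
    (hstall : gradient LW θt + γt • GC = 0)
    (hG : ‖gradient LW θt‖ ^ 2 ≥ γt1 ^ 2 * ‖GC‖ ^ 2)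
    (hm : 0 < m) (hη : 0 < η) (hηM : η < m / M)
    (θt2 : EuclideanSpace ℝ (Fin n))
    (hθ : θt2 = θt - (η / m) • (gradient LW θt + γt1 • GC)) :
    LW θt2 ≤ LW θt - (1 / m) * (η / 2 - M * η ^ 2 / (2 * m)) * ‖gradient LW θt + γt1 • GC‖ ^ 2
    ∧ (¬(gradient LW θt = 0 ∧ GC = 0) →
        LW θt - (1 / m) * (η / 2 - M * η ^ 2 / (2 * m)) * ‖gradient LW θt + γt1 • GC‖ ^ 2
          < LW θt) :=
  stmt16_general LW M η m γt γt1 hLW hlip θt GC hne hstall hG hm hη hηM θt2 hθ
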